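/- arXiv:2103.07375 — 7 statements merged into one kernel-verified Lean document; each statement's English description precedes it below -/
import Mathlib

section
/- If x and y are distinct twin vertices in a connected graph G of order at least 3, then every edge resolving function g of G satisfies g(x) + g(y) ≥ 1. -/
open Finset
open scoped Classical

variable {V : Type*}

/-- Distance from a vertex to an edge: minimum distance to an endpoint. -/
noncomputable def SimpleGraph.edgeDist (G : SimpleGraph V) (e : Sym2 V) (v : V) : ℕ :=
  Sym2.lift ⟨fun a b => min (G.dist a v) (G.dist b v), fun a b => min_comm _ _⟩ e

/-- A set of vertices is an edge resolving set if every pair of distinct edges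
is distinguished by some vertex of the set. -/
def SimpleGraph.IsEdgeResolvingSet (G : SimpleGraph V) (S : Set V) : Prop :=
  ∀ e₁ ∈ G.edgeSet, ∀ e₂ ∈ G.edgeSet, e₁ ≠ e₂ →
    ∃ s ∈ S, G.edgeDist e₁ s ≠ G.edgeDist e₂ s

/-- The edge dimension: minimum cardinality of an edge resolving set. -/
noncomputable def SimpleGraph.edim (G : SimpleGraph V) [Fintype V] : ℕ :=
  sInf {n | ∃ S : Finset V, G.IsEdgeResolvingSet ↑S ∧ S.card = n}

/-- An edge resolving function: a `[0,1]`-valued weighting of the vertices such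
that every pair of distinct edges is resolved by total weight at least 1. -/
def SimpleGraph.IsEdgeResolvingFunction (G : SimpleGraph V) [Fintype V] (g : V → ℝ) : Prop :=
  (∀ v, 0 ≤ g v ∧ g v ≤ 1) ∧
  ∀ e₁ ∈ G.edgeSet, ∀ e₂ ∈ G.edgeSet, e₁ ≠ e₂ →
    1 ≤ ∑ z ∈ Finset.univ.filter (fun z => G.edgeDist e₁ z ≠ G.edgeDist e₂ z), g z

/-- The fractional edge dimension. -/
noncomputable def SimpleGraph.edimf (G : SimpleGraph V) [Fintype V] : ℝ :=
  sInf {x | ∃ g : V → ℝ, G.IsEdgeResolvingFunction g ∧ ∑ v, g v = x}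

/-!
Twins `x`, `y` have a common neighbour `w` (the graph is connected and has a third vertex), and
every vertex other than `x`, `y` is equally far from both, hence from the edges `xw` and `yw`.
So only `x` and `y` can resolve this pair of edges.
-/

namespace SimpleGraph

def AreTwins (G : SimpleGraph V) (x y : V) : Prop :=
  G.neighborSet x \ {y} = G.neighborSet y \ {x}

variable {G : SimpleGraph V}

namespace AreTwins

variable {x y : V}

theorem symm (h : G.AreTwins x y) : G.AreTwins y x :=
  Eq.symm h

theorem adj_of_adj {w : V} (h : G.AreTwins x y) (hxw : G.Adj x w) (hwy : w ≠ y) : G.Adj y w :=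
  ((Set.ext_iff.1 h w).1 ⟨hxw, hwy⟩).1

/-- A shortest walk from `x` leaves through `y` or through a neighbour that `y` shares. -/
theorem dist_le_dist (hG : G.Connected) (h : G.AreTwins x y) {z : V} (hzx : z ≠ x) :
    G.dist y z ≤ G.dist x z := by
  obtain ⟨p, hp⟩ := hG.exists_walk_length_eq_dist x z
  cases p with
  | nil => exact (hzx rfl).elim
  | @cons _ w _ hxw q =>
    rw [Walk.length_cons] at hp
    rw [← hp]
    by_cases hwy : w = y
    · subst hwy
      exact (dist_le q).trans (Nat.le_succ _)
    · exact dist_le (Walk.cons (h.adj_of_adj hxw hwy) q)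

theorem dist_eq_dist (hG : G.Connected) (h : G.AreTwins x y) {z : V} (hzx : z ≠ x)
    (hzy : z ≠ y) : G.dist x z = G.dist y z :=
  le_antisymm (h.symm.dist_le_dist hG hzy) (h.dist_le_dist hG hzx)

theorem edgeDist_eq_edgeDist (hG : G.Connected) (h : G.AreTwins x y) (w : V) {z : V}
    (hzx : z ≠ x) (hzy : z ≠ y) : G.edgeDist s(x, w) z = G.edgeDist s(y, w) z := by
  simp only [edgeDist, Sym2.lift_mk, h.dist_eq_dist hG hzx hzy]

/-- Connectivity forces an edge out of `{x, y}`, and twins share its far endpoint. -/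
theorem exists_common_neighbor [Fintype V] (hG : G.Connected) (hn : 3 ≤ Fintype.card V)
    (h : G.AreTwins x y) : ∃ w, w ≠ y ∧ G.Adj x w ∧ G.Adj y w := by
  obtain ⟨z, hz⟩ : ((univ : Finset V) \ {x, y}).Nonempty := by
    rw [← Finset.card_pos]
    have hsdiff := le_card_sdiff ({x, y} : Finset V) univ
    have hpair := card_le_two (a := x) (b := y)
    rw [card_univ] at hsdiff
    omega
  simp only [mem_sdiff, mem_univ, mem_insert, mem_singleton, true_and, not_or] at hz
  obtain ⟨d, -, hd_in, hd_out⟩ :=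
    (hG x z).some.exists_boundary_dart {x, y} (by simp) (by simpa using hz)
  simp only [Set.mem_insert_iff, Set.mem_singleton_iff, not_or] at hd_in hd_out
  rcases hd_in with hx | hy
  · exact ⟨d.snd, hd_out.2, hx ▸ d.adj, h.adj_of_adj (hx ▸ d.adj) hd_out.2⟩
  · exact ⟨d.snd, hd_out.2, h.symm.adj_of_adj (hy ▸ d.adj) hd_out.1, hy ▸ d.adj⟩

end AreTwins

theorem IsEdgeResolvingFunction.one_le_sum_of_resolving_subset [Fintype V] {g : V → ℝ}
    (hg : G.IsEdgeResolvingFunction g) {e₁ e₂ : Sym2 V} (he₁ : e₁ ∈ G.edgeSet)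
    (he₂ : e₂ ∈ G.edgeSet) (hne : e₁ ≠ e₂) {S : Finset V}
    (hS : ∀ z, G.edgeDist e₁ z ≠ G.edgeDist e₂ z → z ∈ S) :
    1 ≤ ∑ z ∈ S, g z :=
  (hg.2 e₁ he₁ e₂ he₂ hne).trans <|
    sum_le_sum_of_subset_of_nonneg (fun z hz => hS z (mem_filter.1 hz).2)
      fun z _ _ => (hg.1 z).1

end SimpleGraph

/-- For distinct twin vertices in a connected graph of order at least 3,
every edge resolving function `g` satisfies `g x + g y ≥ 1`. -/
theorem stmt_1 [Fintype V] (G : SimpleGraph V) (hG : G.Connected)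
    (hn : 3 ≤ Fintype.card V) (x y : V) (hxy : x ≠ y)
    (htwin : G.neighborSet x \ {y} = G.neighborSet y \ {x})
    (g : V → ℝ) (hg : G.IsEdgeResolvingFunction g) :
    1 ≤ g x + g y := by
  obtain ⟨w, hwy, hxw, hyw⟩ := SimpleGraph.AreTwins.exists_common_neighbor hG hn htwin
  have hne : s(x, w) ≠ s(y, w) := fun h => hxy (Sym2.congr_left.1 h)
  rw [← sum_pair hxy]
  refine hg.one_le_sum_of_resolving_subset hxw hyw hne fun z hz => ?_
  by_contra hzxy
  simp only [mem_insert, mem_singleton, not_or] at hzxy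
  exact hz (SimpleGraph.AreTwins.edgeDist_eq_edgeDist hG htwin w hzxy.1 hzxy.2)
end

section
/- If G is a connected graph with edge dimension edim(G) = 2, then G does not contain K_5 as a subgraph. -/
open Finset
open scoped Classical

variable {V : Type*}

/-!
Within a clique the distances to a fixed vertex `v` differ by at most one, so the edge distances
from `v` to the edges of a clique take only two consecutive values. Recording, for each `s` of an
edge resolving set `S`, which of the two values an edge takes gives an injective code from the
`k.choose 2` edges of a `k`-clique into `S → Bool`, so `k.choose 2 ≤ 2 ^ #S`.
For `K₅` and `#S = 2` this reads `10 ≤ 4`.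
-/

namespace SimpleGraph

variable {G : SimpleGraph V}

lemma edgeDist_mk (a b v : V) : G.edgeDist s(a, b) v = min (G.dist a v) (G.dist b v) := rfl

lemma IsClique.dist_le_dist_add_one {K : Set V} (hK : G.IsClique K) {a b : V} (ha : a ∈ K)
    (hb : b ∈ K) (v : V) : G.dist a v ≤ G.dist b v + 1 := by
  rcases eq_or_ne b a with rfl | hba
  · omega
  have h := (hK hb ha hba).diff_dist_adj (u := v)
  rw [dist_comm (u := v), dist_comm (u := v)] at h
  omega

lemma IsClique.exists_edgeDist_eq_or_eq_succ {K : Finset V} (hK : G.IsClique (K : Set V))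
    (v : V) : ∃ m, ∀ e ∈ K.sym2, G.edgeDist e v = m ∨ G.edgeDist e v = m + 1 := by
  rcases K.eq_empty_or_nonempty with rfl | hne
  · exact ⟨0, by simp⟩
  obtain ⟨c, hc, hmin⟩ := K.exists_min_image (G.dist · v) hne
  refine ⟨G.dist c v, fun e he => ?_⟩
  induction e using Sym2.ind with
  | h a b =>
    rw [mk_mem_sym2_iff] at he
    have hac : G.dist c v ≤ G.dist a v := hmin a he.1
    have hbc : G.dist c v ≤ G.dist b v := hmin b he.2
    have ha := hK.dist_le_dist_add_one he.1 (mem_coe.2 hc) v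
    have hb := hK.dist_le_dist_add_one he.2 (mem_coe.2 hc) v
    rw [edgeDist_mk]
    omega

lemma IsEdgeResolvingSet.card_le_two_pow {S : Finset V} (hS : G.IsEdgeResolvingSet S)
    {E : Finset (Sym2 V)} (hE : ↑E ⊆ G.edgeSet) (m : V → ℕ)
    (hm : ∀ e ∈ E, ∀ s ∈ S, G.edgeDist e s = m s ∨ G.edgeDist e s = m s + 1) :
    #E ≤ 2 ^ #S := by
  let code : Sym2 V → S → Bool := fun e s => decide (G.edgeDist e s = m s)
  have hinj : Set.InjOn code E := by
    intro e₁ he₁ e₂ he₂ hcode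
    by_contra hne
    obtain ⟨s, hs, hdist⟩ := hS e₁ (hE he₁) e₂ (hE he₂) hne
    have hs' := congrFun hcode ⟨s, hs⟩
    simp only [code, decide_eq_decide] at hs'
    rcases hm e₁ he₁ s hs with h₁ | h₁ <;> rcases hm e₂ he₂ s hs with h₂ | h₂ <;> omega
  calc #E ≤ #(univ : Finset (S → Bool)) :=
        card_le_card_of_injOn code (fun _ _ => mem_coe.2 (mem_univ _)) hinj
    _ = 2 ^ #S := by simp

lemma IsEdgeResolvingSet.choose_two_le_two_pow {S : Finset V} (hS : G.IsEdgeResolvingSet S)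
    {K : Finset V} (hK : G.IsClique (K : Set V)) : (#K).choose 2 ≤ 2 ^ #S := by
  choose m hm using hK.exists_edgeDist_eq_or_eq_succ
  have hsub : K.offDiag.image Sym2.mk.uncurry ⊆ K.sym2 := by
    simp only [subset_iff, mem_image, mem_offDiag]
    rintro _ ⟨⟨a, b⟩, ⟨ha, hb, -⟩, rfl⟩
    exact mk_mem_sym2_iff.2 ⟨ha, hb⟩
  rw [← Sym2.card_image_offDiag]
  refine hS.card_le_two_pow ?_ m fun e he s _ => hm s e (hsub he)
  simp only [Set.subset_def, coe_image, Set.mem_image, mem_coe, mem_offDiag]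
  rintro _ ⟨⟨a, b⟩, ⟨ha, hb, hab⟩, rfl⟩
  exact hK ha hb hab

lemma exists_isEdgeResolvingSet_card_eq_edim [Fintype V] (h : G.edim ≠ 0) :
    ∃ S : Finset V, G.IsEdgeResolvingSet S ∧ #S = G.edim := by
  have hne : {n | ∃ S : Finset V, G.IsEdgeResolvingSet ↑S ∧ #S = n}.Nonempty := by
    by_contra hempty
    exact h (by rw [edim, Set.not_nonempty_iff_eq_empty.1 hempty, Nat.sInf_empty])
  exact Nat.sInf_mem hne

end SimpleGraph

theorem stmt_3_general [Fintype V] (G : SimpleGraph V) (h : G.edim = 2) :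
    ¬ ∃ f : Fin 5 ↪ V, ∀ i j : Fin 5, i ≠ j → G.Adj (f i) (f j) := by
  rintro ⟨f, hf⟩
  obtain ⟨S, hS, hcard⟩ := G.exists_isEdgeResolvingSet_card_eq_edim (by omega)
  have hK : G.IsClique (univ.map f : Set V) := by
    simp only [coe_map, coe_univ, Set.image_univ]
    rintro _ ⟨i, rfl⟩ _ ⟨j, rfl⟩ hij
    exact hf i j (ne_of_apply_ne f hij)
  have hbound := hS.choose_two_le_two_pow hK
  rw [card_map, card_univ, Fintype.card_fin, hcard, h] at hbound
  exact absurd hbound (by decide)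

/-- If `edim(G) = 2` then `G` contains no `K₅` subgraph. -/
theorem stmt_3 [Fintype V] (G : SimpleGraph V) (hG : G.Connected) (h : G.edim = 2) :
    ¬ ∃ f : Fin 5 ↪ V, ∀ i j : Fin 5, i ≠ j → G.Adj (f i) (f j) :=
  stmt_3_general G h
end

section
/- For the path P_n on n ≥ 3 vertices, edim_f(P_n) = 1. -/
open Finset
open scoped Classical

variable {V : Type*}

/-! The endpoint `u₁ = 0` alone resolves every pair of distinct edges, since the edge
`s(a, a + 1)` lies at distance `a` from it; so its indicator is an edge resolving function of
weight `1`. Conversely, any edge resolving function puts weight at least `1` on the resolving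
vertices of one pair of distinct edges, and its weights are nonnegative. -/

namespace SimpleGraph

variable [Fintype V] {G : SimpleGraph V}

theorem IsEdgeResolvingFunction.one_le_sum {g : V → ℝ} (hg : G.IsEdgeResolvingFunction g)
    {e₁ e₂ : Sym2 V} (he₁ : e₁ ∈ G.edgeSet) (he₂ : e₂ ∈ G.edgeSet) (hne : e₁ ≠ e₂) :
    1 ≤ ∑ v, g v :=
  (hg.2 e₁ he₁ e₂ he₂ hne).trans <|
    Finset.sum_le_sum_of_subset_of_nonneg (Finset.filter_subset _ _) fun v _ _ => (hg.1 v).1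

theorem isEdgeResolvingFunction_single {v : V} (hv : Set.InjOn (G.edgeDist · v) G.edgeSet) :
    G.IsEdgeResolvingFunction (Pi.single v 1) := by
  refine ⟨fun w => ?_, fun e₁ he₁ e₂ he₂ hne => ?_⟩
  · rcases eq_or_ne w v with rfl | hw <;> simp [*]
  · have hv_mem : v ∈ Finset.univ.filter (fun z => G.edgeDist e₁ z ≠ G.edgeDist e₂ z) := by
      simpa using fun h => hne (hv he₁ he₂ h)
    simp [Finset.sum_pi_single', hv_mem]

theorem edimf_eq_one {v : V} (hv : Set.InjOn (G.edgeDist · v) G.edgeSet) {e₁ e₂ : Sym2 V}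
    (he₁ : e₁ ∈ G.edgeSet) (he₂ : e₂ ∈ G.edgeSet) (hne : e₁ ≠ e₂) : G.edimf = 1 := by
  refine IsLeast.csInf_eq ⟨⟨Pi.single v 1, isEdgeResolvingFunction_single hv, by simp⟩, ?_⟩
  rintro _ ⟨g, hg, rfl⟩
  exact hg.one_le_sum he₁ he₂ hne

theorem pathGraph_dist_le_of_walk {n : ℕ} {u v : Fin n} (p : (pathGraph n).Walk u v) :
    Nat.dist u v ≤ p.length := by
  induction p with
  | nil => simp
  | @cons a b c hab p ih =>
    have hab' : Nat.dist a b = 1 := by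
      rcases pathGraph_adj.1 hab with h | h <;> simp [Nat.dist, ← h]
    have := Nat.dist.triangle_inequality a b c
    simp only [Walk.length_cons]
    omega

theorem pathGraph_dist_add_le {n a k : ℕ} (h : a + k < n) :
    (pathGraph n).dist ⟨a, by omega⟩ ⟨a + k, h⟩ ≤ k := by
  induction k with
  | zero => simp
  | succ k ih =>
    have hadj : (pathGraph n).Adj ⟨a + k, by omega⟩ ⟨a + (k + 1), h⟩ :=
      pathGraph_adj.2 (Or.inl rfl)
    calc _ ≤ (pathGraph n).dist ⟨a, by omega⟩ ⟨a + k, by omega⟩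
          + (pathGraph n).dist ⟨a + k, by omega⟩ ⟨a + (k + 1), h⟩ :=
          hadj.reachable.dist_triangle_right _
      _ ≤ k + 1 := add_le_add (ih _) (dist_eq_one_iff_adj.2 hadj).le

theorem pathGraph_dist {n : ℕ} (u v : Fin n) : (pathGraph n).dist u v = Nat.dist u v := by
  refine le_antisymm ?_ ?_
  · wlog huv : u ≤ v generalizing u v
    · rw [dist_comm, Nat.dist_comm]
      exact this v u (le_of_not_ge huv)
    obtain ⟨a, ha⟩ := u
    obtain ⟨b, hb⟩ := v
    obtain ⟨k, rfl⟩ := Nat.exists_eq_add_of_le (Fin.mk_le_mk.1 huv)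
    simpa [Nat.dist] using pathGraph_dist_add_le hb
  · obtain ⟨p, hp⟩ := (pathGraph_preconnected n u v).exists_walk_length_eq_dist
    exact hp ▸ pathGraph_dist_le_of_walk p

theorem pathGraph_edgeDist_zero {n : ℕ} (hn : 0 < n) (a b : Fin n) :
    (pathGraph n).edgeDist s(a, b) ⟨0, hn⟩ = min (a : ℕ) b := by
  simp [edgeDist, pathGraph_dist, Nat.dist_zero_right]

theorem pathGraph_injOn_edgeDist_zero {n : ℕ} (hn : 0 < n) :
    Set.InjOn ((pathGraph n).edgeDist · ⟨0, hn⟩) (pathGraph n).edgeSet := by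
  intro e₁ he₁ e₂ he₂ hdist
  induction e₁ using Sym2.ind with | _ a b =>
  induction e₂ using Sym2.ind with | _ c d =>
  simp only [mem_edgeSet, pathGraph_adj, pathGraph_edgeDist_zero] at he₁ he₂ hdist
  simp only [Sym2.eq_iff, Fin.ext_iff]
  omega

end SimpleGraph

/-- For the path `P_n` with `n ≥ 3`, `edim_f(P_n) = 1`. -/
theorem stmt_8 (n : ℕ) (hn : 3 ≤ n) :
    (SimpleGraph.pathGraph n).edimf = 1 := by
  have h0 : 0 < n := by omega
  have h1 : 1 < n := by omega
  have h2 : 2 < n := by omega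
  refine SimpleGraph.edimf_eq_one (SimpleGraph.pathGraph_injOn_edgeDist_zero h0)
    (e₁ := s(⟨0, h0⟩, ⟨1, h1⟩)) (e₂ := s(⟨1, h1⟩, ⟨2, h2⟩)) ?_ ?_ ?_
  all_goals simp [SimpleGraph.pathGraph_adj, Fin.ext_iff]
end

section
/- For the complete graph K_n with n ≥ 3, edim_f(K_n) = n/2. -/
open Finset
open scoped Classical

variable {V : Type*}

/-!
In `K_n` an edge is at distance `0` from its endpoints and `1` from every other vertex, so two
edges are resolved exactly by the symmetric difference of their endpoint sets. For distinct edges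
this contains a vertex of each, so the constant weight `1/2` is resolving. Conversely, given a
third vertex `w`, the edges `uw` and `vw` are resolved only by `u` and `v`, so every resolving
function has `g u + g v ≥ 1` for all `u ≠ v`; summing over ordered pairs gives `∑ g ≥ n/2`.
-/

theorem Sym2.exists_mem_notMem_of_ne {α : Type*} {e₁ e₂ : Sym2 α} (hne : e₁ ≠ e₂)
    (h : ¬e₂.IsDiag) : ∃ y ∈ e₂, y ∉ e₁ := by
  by_contra! hsub
  induction e₂ using Sym2.ind with
  | _ c d =>
    exact hne ((Sym2.mem_and_mem_iff (Sym2.mk_isDiag_iff.not.mp h)).mp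
      ⟨hsub c (Sym2.mem_mk_left c d), hsub d (Sym2.mem_mk_right c d)⟩)

theorem card_div_two_le_sum_of_one_le_add {ι : Type*} [Fintype ι] (hι : 2 ≤ Fintype.card ι)
    {g : ι → ℝ} (hg : ∀ u v, u ≠ v → 1 ≤ g u + g v) :
    (Fintype.card ι : ℝ) / 2 ≤ ∑ v, g v := by
  set n := Fintype.card ι
  set S := ∑ v, g v
  have hcard_erase : ∀ u : ι, ((univ.erase u).card : ℝ) = n - 1 := fun u => by
    rw [card_erase_of_mem (mem_univ u), card_univ, Nat.cast_sub (by omega), Nat.cast_one]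
  have hrow : ∀ u, ∑ v ∈ univ.erase u, (g u + g v) = (n - 1) * g u + (S - g u) := fun u => by
    rw [sum_add_distrib, sum_const, nsmul_eq_mul, hcard_erase, sum_erase_eq_sub (mem_univ u)]
  have hrow_ge : ∀ u, (n : ℝ) - 1 ≤ ∑ v ∈ univ.erase u, (g u + g v) := fun u => by
    have := card_nsmul_le_sum (univ.erase u) (fun v => g u + g v) 1
      fun v hv => hg u v (ne_of_mem_erase hv).symm
    rwa [nsmul_eq_mul, hcard_erase, mul_one] at this
  have hdouble : (n : ℝ) * (n - 1) ≤ 2 * (n - 1) * S :=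
    calc (n : ℝ) * (n - 1) = ∑ _u : ι, ((n : ℝ) - 1) := by
          rw [sum_const, card_univ, nsmul_eq_mul]
      _ ≤ ∑ u, ∑ v ∈ univ.erase u, (g u + g v) := sum_le_sum fun u _ => hrow_ge u
      _ = 2 * (n - 1) * S := by
        simp only [hrow, sum_add_distrib, ← mul_sum, sum_sub_distrib, sum_const, card_univ,
          nsmul_eq_mul]
        ring
  have hn : (2 : ℝ) ≤ n := by exact_mod_cast hι
  nlinarith

namespace SimpleGraph

theorem edgeDist_top (e : Sym2 V) (z : V) :
    (⊤ : SimpleGraph V).edgeDist e z = if z ∈ e then 0 else 1 := by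
  induction e using Sym2.ind with
  | _ a b =>
    simp only [edgeDist, Sym2.lift_mk, dist_top, Sym2.mem_iff]
    split_ifs <;> simp_all [eq_comm]

theorem edgeDist_top_ne_edgeDist_top_iff {e₁ e₂ : Sym2 V} {z : V} :
    (⊤ : SimpleGraph V).edgeDist e₁ z ≠ (⊤ : SimpleGraph V).edgeDist e₂ z ↔
      ¬(z ∈ e₁ ↔ z ∈ e₂) := by
  simp only [edgeDist_top]
  split_ifs <;> simp_all

variable [Fintype V]

theorem isEdgeResolvingFunction_top_half :
    (⊤ : SimpleGraph V).IsEdgeResolvingFunction (fun _ => 1 / 2) := by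
  refine ⟨fun _ => by norm_num, fun e₁ he₁ e₂ he₂ hne => ?_⟩
  obtain ⟨x, hx₂, hx₁⟩ :=
    Sym2.exists_mem_notMem_of_ne hne (not_isDiag_of_mem_edgeSet _ he₂)
  obtain ⟨y, hy₁, hy₂⟩ :=
    Sym2.exists_mem_notMem_of_ne hne.symm (not_isDiag_of_mem_edgeSet _ he₁)
  have htwo : 1 < (univ.filter fun z =>
      (⊤ : SimpleGraph V).edgeDist e₁ z ≠ (⊤ : SimpleGraph V).edgeDist e₂ z).card := by
    refine one_lt_card.mpr ⟨x, ?_, y, ?_, ?_⟩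
    · simp [edgeDist_top_ne_edgeDist_top_iff, hx₁, hx₂]
    · simp [edgeDist_top_ne_edgeDist_top_iff, hy₁, hy₂]
    · rintro rfl
      exact hx₁ hy₁
  rw [sum_const, nsmul_eq_mul]
  have : (2 : ℝ) ≤ _ := Nat.cast_le.mpr htwo
  linarith

theorem IsEdgeResolvingFunction.one_le_add_of_top {g : V → ℝ}
    (hg : (⊤ : SimpleGraph V).IsEdgeResolvingFunction g) {u v w : V}
    (huv : u ≠ v) (hwu : w ≠ u) (hwv : w ≠ v) : 1 ≤ g u + g v := by
  have hresolve : (univ.filter fun z =>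
      (⊤ : SimpleGraph V).edgeDist s(u, w) z ≠ (⊤ : SimpleGraph V).edgeDist s(v, w) z) =
      {u, v} := by
    ext z
    simp only [mem_filter, mem_univ, true_and, edgeDist_top_ne_edgeDist_top_iff, Sym2.mem_iff,
      mem_insert, mem_singleton]
    grind
  have hne : s(u, w) ≠ s(v, w) := by
    simp [huv, hwu.symm]
  simpa [hresolve, sum_pair huv] using
    hg.2 _ (by simpa using hwu.symm) _ (by simpa using hwv.symm) hne

theorem edimf_top (hV : 3 ≤ Fintype.card V) :
    (⊤ : SimpleGraph V).edimf = Fintype.card V / 2 := by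
  refine IsLeast.csInf_eq
    ⟨⟨_, isEdgeResolvingFunction_top_half, by simp [div_eq_mul_inv]⟩, ?_⟩
  rintro _ ⟨g, hg, rfl⟩
  refine card_div_two_le_sum_of_one_le_add (by omega) fun u v huv => ?_
  obtain ⟨w, hwu, hwv⟩ := Cardinal.exists_ne_ne_of_three_le (by simpa using hV) u v
  exact hg.one_le_add_of_top huv hwu hwv

end SimpleGraph

/-- For the complete graph `K_n` with `n ≥ 3`, `edim_f(K_n) = n / 2`. -/
theorem stmt_10 (n : ℕ) (hn : 3 ≤ n) :
    (⊤ : SimpleGraph (Fin n)).edimf = (n : ℝ) / 2 := by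
  simpa using SimpleGraph.edimf_top (V := Fin n) (by simpa using hn)
end

section
/- For the cycle C_n with n ≥ 3 odd, edim_f(C_n) = n/(n−1). -/
open Finset
open scoped Classical

variable {V : Type*}

/-! Every vertex `v` of a cycle lies on two edges, both at distance `0` from `v`, so an edge
resolving function `g` satisfies `1 + g v ≤ ∑ g`; summing over `v` gives `n / (n - 1) ≤ ∑ g`.
Conversely, the edges `i(i+1)` and `j(j+1)` of `C_n` are equidistant exactly from the vertices
`v` with `2v = i + j + 1`, and for odd `n` there is only one of them. So every pair of distinct
edges is resolved by `n - 1` vertices, and the constant weight `1 / (n - 1)` is an edge resolving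
function of total weight `n / (n - 1)`. -/

namespace Fin

variable {n : ℕ}

lemma val_one_of_two_le [NeZero n] (hn : 2 ≤ n) : (1 : Fin n).val = 1 :=
  Nat.mod_eq_of_lt hn

lemma val_sub_eq_ite (a b : Fin n) :
    (a - b).val = if b.val ≤ a.val then a.val - b.val else n + a.val - b.val := by
  split_ifs with h
  · exact sub_val_of_le h
  · exact coe_sub_iff_lt.2 (by omega)

lemma eq_of_add_self_eq_add_self (hodd : Odd n) {v w : Fin n} (h : v + v = w + w) : v = w := by
  obtain ⟨k, rfl⟩ := hodd
  have hval := congrArg Fin.val h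
  simp only [val_add_eq_ite] at hval
  ext
  split_ifs at hval <;> omega

end Fin

namespace SimpleGraph

variable {G : SimpleGraph V}

lemma edgeDist_eq_zero_of_mem {e : Sym2 V} {v : V} (h : v ∈ e) : G.edgeDist e v = 0 := by
  induction e with
  | _ a b => rcases Sym2.mem_iff.1 h with rfl | rfl <;> simp [edgeDist]

lemma Reachable.le_add_dist (f : V → ℕ) (hf : ∀ u v, G.Adj u v → f u ≤ f v + 1) {u v : V}
    (h : G.Reachable u v) : f u ≤ f v + G.dist u v := by
  have walk_bound : ∀ {u v : V} (p : G.Walk u v), f u ≤ f v + p.length := by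
    intro u v p
    induction p with
    | nil => simp
    | cons hadj p ih => rw [Walk.length_cons]; have := hf _ _ hadj; omega
  obtain ⟨p, hp⟩ := h.exists_walk_length_eq_dist
  exact hp ▸ walk_bound p

section Fractional

variable [Fintype V]

lemma edimf_le_sum {g : V → ℝ} (hg : G.IsEdgeResolvingFunction g) : G.edimf ≤ ∑ v, g v :=
  csInf_le ⟨0, by rintro _ ⟨g', hg', rfl⟩; exact sum_nonneg fun v _ => (hg'.1 v).1⟩ ⟨g, hg, rfl⟩

lemma le_edimf {c : ℝ} (hne : ∃ g, G.IsEdgeResolvingFunction g)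
    (h : ∀ g, G.IsEdgeResolvingFunction g → c ≤ ∑ v, g v) : c ≤ G.edimf := by
  obtain ⟨g, hg⟩ := hne
  exact le_csInf ⟨_, g, hg, rfl⟩ (by rintro _ ⟨g', hg', rfl⟩; exact h g' hg')

lemma isEdgeResolvingFunction_const {k : ℕ} (hk : 0 < k)
    (h : ∀ e₁ ∈ G.edgeSet, ∀ e₂ ∈ G.edgeSet, e₁ ≠ e₂ →
      k ≤ #{z | G.edgeDist e₁ z ≠ G.edgeDist e₂ z}) :
    G.IsEdgeResolvingFunction fun _ => (k : ℝ)⁻¹ := by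
  have hk' : (1 : ℝ) ≤ k := by exact_mod_cast hk
  refine ⟨fun _ => ⟨by positivity, inv_le_one_of_one_le₀ hk'⟩, fun e₁ he₁ e₂ he₂ hne => ?_⟩
  rw [sum_const, nsmul_eq_mul, ← div_eq_mul_inv, one_le_div (by positivity)]
  exact_mod_cast h e₁ he₁ e₂ he₂ hne

lemma edimf_le_card_div {k : ℕ} (hk : 0 < k)
    (h : ∀ e₁ ∈ G.edgeSet, ∀ e₂ ∈ G.edgeSet, e₁ ≠ e₂ →
      k ≤ #{z | G.edgeDist e₁ z ≠ G.edgeDist e₂ z}) :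
    G.edimf ≤ Fintype.card V / k := by
  simpa [div_eq_mul_inv] using edimf_le_sum (isEdgeResolvingFunction_const hk h)

lemma IsEdgeResolvingFunction.one_add_le_sum {g : V → ℝ} (hg : G.IsEdgeResolvingFunction g)
    {v : V} (hv : (G.neighborSet v).Nontrivial) : 1 + g v ≤ ∑ u, g u := by
  obtain ⟨a, ha, b, hb, hab⟩ := hv
  have hne : s(v, a) ≠ s(v, b) := fun h => hab (Sym2.congr_right.1 h)
  have hsub : ({z | G.edgeDist s(v, a) z ≠ G.edgeDist s(v, b) z} : Finset V) ⊆ univ.erase v := by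
    intro z hz
    simp only [mem_filter, mem_univ, true_and] at hz
    refine mem_erase.2 ⟨fun hzv => hz ?_, mem_univ z⟩
    rw [hzv, edgeDist_eq_zero_of_mem (Sym2.mem_mk_left v a),
      edgeDist_eq_zero_of_mem (Sym2.mem_mk_left v b)]
  calc 1 + g v
      ≤ (∑ z ∈ {z | G.edgeDist s(v, a) z ≠ G.edgeDist s(v, b) z}, g z) + g v :=
        add_le_add_left (hg.2 _ ha _ hb hne) _
    _ ≤ (∑ z ∈ univ.erase v, g z) + g v :=
        add_le_add_left (sum_le_sum_of_subset_of_nonneg hsub fun z _ _ => (hg.1 z).1) _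
    _ = ∑ u, g u := by rw [add_comm, add_sum_erase _ _ (mem_univ v)]

lemma card_div_card_sub_one_le_edimf (hV : ∀ v, (G.neighborSet v).Nontrivial)
    (hne : ∃ g, G.IsEdgeResolvingFunction g) :
    (Fintype.card V : ℝ) / (Fintype.card V - 1) ≤ G.edimf := by
  refine le_edimf hne fun g hg => ?_
  have hsum_nonneg : 0 ≤ ∑ v, g v := sum_nonneg fun v _ => (hg.1 v).1
  have hsum : (Fintype.card V : ℝ) + ∑ v, g v ≤ Fintype.card V * ∑ v, g v := by
    simpa [sum_add_distrib] using sum_le_sum fun v (_ : v ∈ univ) => hg.one_add_le_sum (hV v)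
  rcases le_or_gt (Fintype.card V : ℝ) 1 with hcard | hcard
  · exact (div_nonpos_of_nonneg_of_nonpos (by positivity) (by linarith)).trans hsum_nonneg
  · rw [div_le_iff₀ (by linarith)]
    linarith

end Fractional

section Cycle

variable {n : ℕ} [NeZero n]

lemma cycleGraph_adj_iff (hn : 2 ≤ n) {u v : Fin n} :
    (cycleGraph n).Adj u v ↔ u = v + 1 ∨ v = u + 1 := by
  rw [cycleGraph_adj', ← Fin.val_one_of_two_le hn, ← Fin.ext_iff, ← Fin.ext_iff,
    sub_eq_iff_eq_add', sub_eq_iff_eq_add', add_comm v, add_comm u]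

lemma mem_edgeSet_cycleGraph_iff (hn : 2 ≤ n) {e : Sym2 (Fin n)} :
    e ∈ (cycleGraph n).edgeSet ↔ ∃ i, e = s(i, i + 1) := by
  induction e with
  | _ u v =>
    rw [mem_edgeSet, cycleGraph_adj_iff hn]
    constructor
    · rintro (rfl | rfl)
      exacts [⟨v, Sym2.eq_swap⟩, ⟨u, rfl⟩]
    · rintro ⟨i, hi⟩
      rcases Sym2.eq_iff.1 hi with ⟨rfl, rfl⟩ | ⟨rfl, rfl⟩
      exacts [Or.inr rfl, Or.inl rfl]

lemma cycleGraph_exists_walk_length_eq (hn : 2 ≤ n) (i j : Fin n) :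
    ∃ p : (cycleGraph n).Walk i j, p.length = (j - i).val := by
  suffices ∀ a i, (j - i).val = a → ∃ p : (cycleGraph n).Walk i j, p.length = a from this _ i rfl
  intro a
  induction a with
  | zero =>
    intro i h
    obtain rfl : j = i := sub_eq_zero.1 (Fin.ext h)
    exact ⟨Walk.nil, rfl⟩
  | succ a ih =>
    intro i h
    have hstep : (j - (i + 1)).val = a := by
      rw [sub_add_eq_sub_sub, Fin.val_sub_eq_ite, Fin.val_one_of_two_le hn, h]
      simp
    obtain ⟨p, hp⟩ := ih (i + 1) hstep
    exact ⟨Walk.cons ((cycleGraph_adj_iff hn).2 (Or.inr rfl)) p, by simp [hp]⟩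

lemma cycleGraph_dist (hn : 2 ≤ n) (i j : Fin n) :
    (cycleGraph n).dist i j = min (j - i).val (i - j).val := by
  apply le_antisymm
  · obtain ⟨p, hp⟩ := cycleGraph_exists_walk_length_eq hn i j
    obtain ⟨q, hq⟩ := cycleGraph_exists_walk_length_eq hn j i
    exact le_min (hp ▸ dist_le p) (hq ▸ dist_comm (G := cycleGraph n) ▸ dist_le q)
  · have hlip : ∀ x y, (cycleGraph n).Adj x y →
        min (j - x).val (x - j).val ≤ min (j - y).val (y - j).val + 1 := by
      intro x y hxy
      have h1 := Fin.val_one_of_two_le hn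
      rcases (cycleGraph_adj_iff hn).1 hxy with rfl | rfl <;>
      · simp only [Fin.val_sub_eq_ite, Fin.val_add_eq_ite, h1]
        split_ifs <;> omega
    simpa using cycleGraph_preconnected i j |>.le_add_dist _ hlip

/-- Truncated subtraction makes the formula also right at `v = i`. -/
lemma cycleGraph_edgeDist (hn : 2 ≤ n) (i v : Fin n) :
    (cycleGraph n).edgeDist s(i, i + 1) v = min ((v - i).val - 1) (n - (v - i).val) := by
  change min ((cycleGraph n).dist i v) ((cycleGraph n).dist (i + 1) v) = _
  have h1 := Fin.val_one_of_two_le hn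
  simp only [cycleGraph_dist hn, Fin.val_sub_eq_ite, Fin.val_add_eq_ite, h1]
  split_ifs <;> omega

lemma cycleGraph_edgeDist_eq_iff (hn : 2 ≤ n) {i j : Fin n} (hij : i ≠ j) (v : Fin n) :
    (cycleGraph n).edgeDist s(i, i + 1) v = (cycleGraph n).edgeDist s(j, j + 1) v ↔
      v + v = i + j + 1 := by
  have hsum : v + v = i + j + 1 ↔ v - i + (v - j) = 1 := by
    rw [show v - i + (v - j) = v + v - (i + j) by abel, sub_eq_iff_eq_add']
  have hne : (v - i).val ≠ (v - j).val := fun h => hij (sub_right_injective (Fin.ext h))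
  have := (v - i).isLt
  have := (v - j).isLt
  rw [hsum, cycleGraph_edgeDist hn, cycleGraph_edgeDist hn, Fin.ext_iff, Fin.val_add_eq_ite,
    Fin.val_one_of_two_le hn]
  split_ifs <;> omega

lemma cycleGraph_neighborSet_nontrivial (hn : 3 ≤ n) (v : Fin n) :
    ((cycleGraph n).neighborSet v).Nontrivial := by
  refine ⟨v + 1, (cycleGraph_adj_iff (by omega)).2 (Or.inr rfl),
    v - 1, (cycleGraph_adj_iff (by omega)).2 (Or.inl (sub_add_cancel v 1).symm), fun h => ?_⟩
  have hval := congrArg Fin.val h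
  simp only [Fin.val_sub_eq_ite, Fin.val_add_eq_ite, Fin.val_one_of_two_le (by omega : 2 ≤ n)]
    at hval
  split_ifs at hval <;> omega

lemma cycleGraph_sub_one_le_card_filter_edgeDist_ne (hn : 3 ≤ n) (hodd : Odd n) :
    ∀ e₁ ∈ (cycleGraph n).edgeSet, ∀ e₂ ∈ (cycleGraph n).edgeSet, e₁ ≠ e₂ →
      n - 1 ≤ #{z | (cycleGraph n).edgeDist e₁ z ≠ (cycleGraph n).edgeDist e₂ z} := by
  intro e₁ he₁ e₂ he₂ hne
  obtain ⟨i, rfl⟩ := (mem_edgeSet_cycleGraph_iff (by omega)).1 he₁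
  obtain ⟨j, rfl⟩ := (mem_edgeSet_cycleGraph_iff (by omega)).1 he₂
  have hij : i ≠ j := by rintro rfl; exact hne rfl
  have hfix : #{z | ¬(cycleGraph n).edgeDist s(i, i + 1) z ≠
      (cycleGraph n).edgeDist s(j, j + 1) z} ≤ 1 := by
    refine card_le_one.2 fun v hv w hw => ?_
    simp only [mem_filter, mem_univ, true_and, not_not,
      cycleGraph_edgeDist_eq_iff (by omega) hij] at hv hw
    exact Fin.eq_of_add_self_eq_add_self hodd (hv.trans hw.symm)
  have htotal := card_filter_add_card_filter_not (s := univ)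
    fun z => (cycleGraph n).edgeDist s(i, i + 1) z ≠ (cycleGraph n).edgeDist s(j, j + 1) z
  rw [card_univ, Fintype.card_fin] at htotal
  omega

end Cycle

end SimpleGraph

/-- For the odd cycle `C_n`, `n ≥ 3`, `edim_f(C_n) = n / (n - 1)`. -/
theorem stmt_11 (n : ℕ) (hn : 3 ≤ n) (hodd : Odd n) :
    (SimpleGraph.cycleGraph n).edimf = (n : ℝ) / ((n : ℝ) - 1) := by
  have : NeZero n := ⟨by omega⟩
  have hres := SimpleGraph.cycleGraph_sub_one_le_card_filter_edgeDist_ne hn hodd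
  have hk : 0 < n - 1 := by omega
  have hcast : ((n - 1 : ℕ) : ℝ) = n - 1 := by rw [Nat.cast_sub (by omega), Nat.cast_one]
  apply le_antisymm
  · simpa [hcast] using SimpleGraph.edimf_le_card_div hk hres
  · simpa using SimpleGraph.card_div_card_sub_one_le_edimf
      (SimpleGraph.cycleGraph_neighborSet_nontrivial hn)
      ⟨_, SimpleGraph.isEdgeResolvingFunction_const hk hres⟩
end

section
/- For the Petersen graph P, edim_f(P) = 5/2. -/
open Finset
open scoped Classical

variable {V : Type*}

/-- The Petersen graph: outer 5-cycle `inl i ~ inl (i+1)`, inner pentagram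
`inr i ~ inr (i+2)`, spokes `inl i ~ inr i`. -/
def petersenGraph : SimpleGraph (Fin 5 ⊕ Fin 5) :=
  SimpleGraph.fromRel (fun a b =>
    match a, b with
    | Sum.inl i, Sum.inl j => j = i + 1
    | Sum.inr i, Sum.inr j => j = i + 2
    | Sum.inl i, Sum.inr j => i = j
    | _, _ => False)

/-!
A weight of `1/4` on every vertex is edge resolving because any two distinct edges of the
Petersen graph are resolved by at least four vertices. Conversely, writing `u_i = .inl i`
and `w_i = .inr i`, the five pairs `u_i u_{i+1}`, `w_{i+2} w_{i+4}` are resolved by exactly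
`{u_i, u_{i+1}, w_{i+2}, w_{i+4}}`; these five sets cover every vertex exactly twice, so
summing their constraints gives `5 ≤ 2 ∑ g` for every edge resolving function `g`.
-/

theorem Fintype.card_le_mul_sum_of_one_le_sum {ι α : Type*} [Fintype ι] [Fintype α]
    [DecidableEq α] (S : ι → Finset α) {g : α → ℝ} (hg : ∀ a, 0 ≤ g a)
    (hS : ∀ i, 1 ≤ ∑ a ∈ S i, g a) {c : ℕ} (hc : ∀ a, #{i | a ∈ S i} ≤ c) :
    (Fintype.card ι : ℝ) ≤ c * ∑ a, g a :=
  calc (Fintype.card ι : ℝ) = ∑ _i : ι, 1 := by simp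
    _ ≤ ∑ i, ∑ a ∈ S i, g a := sum_le_sum fun i _ => hS i
    _ = ∑ a, ∑ _i ∈ {i | a ∈ S i}, g a := sum_comm' fun i a => by simp
    _ ≤ ∑ a, c * g a := sum_le_sum fun a _ => by
      rw [sum_const, nsmul_eq_mul]
      exact mul_le_mul_of_nonneg_right (by exact_mod_cast hc a) (hg a)
    _ = c * ∑ a, g a := (mul_sum _ _ _).symm

namespace SimpleGraph

variable (G : SimpleGraph V)

theorem dist_eq_ite_of_commonNeighbors_nonempty [DecidableEq V] [DecidableRel G.Adj]
    (h : ∀ u v, u ≠ v → ¬G.Adj u v → (G.commonNeighbors u v).Nonempty) (u v : V) :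
    G.dist u v = if u = v then 0 else if G.Adj u v then 1 else 2 := by
  split_ifs with huv hadj
  · simp [huv]
  · exact dist_eq_one_iff_adj.mpr hadj
  · rw [dist, edist_eq_two_iff.mpr ⟨huv, hadj, h u v huv hadj⟩]
    rfl

/-- The set `R_e{e₁, e₂}` of vertices resolving the edges `e₁` and `e₂`. -/
noncomputable def edgeResolvers [Fintype V] (e₁ e₂ : Sym2 V) : Finset V :=
  univ.filter fun z => G.edgeDist e₁ z ≠ G.edgeDist e₂ z

theorem edgeResolvers_mk [Fintype V] (a b c d : V) :
    G.edgeResolvers s(a, b) s(c, d) =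
      univ.filter fun z => min (G.dist a z) (G.dist b z) ≠ min (G.dist c z) (G.dist d z) :=
  rfl

theorem isEdgeResolvingFunction_const_inv [Fintype V] {G : SimpleGraph V} {k : ℕ} (hk : 0 < k)
    (h : ∀ e₁ ∈ G.edgeSet, ∀ e₂ ∈ G.edgeSet, e₁ ≠ e₂ → k ≤ #(G.edgeResolvers e₁ e₂)) :
    G.IsEdgeResolvingFunction fun _ => (k : ℝ)⁻¹ := by
  have hk' : (1 : ℝ) ≤ k := by exact_mod_cast hk
  refine ⟨fun _ => ⟨by positivity, inv_le_one_of_one_le₀ hk'⟩, fun e₁ h₁ e₂ h₂ hne => ?_⟩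
  change 1 ≤ ∑ _z ∈ G.edgeResolvers e₁ e₂, (k : ℝ)⁻¹
  rw [sum_const, nsmul_eq_mul]
  calc (1 : ℝ) = k * (k : ℝ)⁻¹ := (mul_inv_cancel₀ (by positivity)).symm
    _ ≤ _ := mul_le_mul_of_nonneg_right (by exact_mod_cast h e₁ h₁ e₂ h₂ hne) (by positivity)

end SimpleGraph

instance : DecidableRel petersenGraph.Adj
  | .inl _, .inl _ | .inl _, .inr _ | .inr _, .inl _ | .inr _, .inr _ =>
    inferInstanceAs (Decidable (_ ∧ _))

def petersenDist (u v : Fin 5 ⊕ Fin 5) : ℕ :=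
  if u = v then 0 else if petersenGraph.Adj u v then 1 else 2

theorem petersenGraph_dist : petersenGraph.dist = petersenDist := by
  have hdiam : ∀ u v, u ≠ v → ¬petersenGraph.Adj u v →
      ∃ w, petersenGraph.Adj u w ∧ petersenGraph.Adj v w := by
    decide
  funext u v
  exact petersenGraph.dist_eq_ite_of_commonNeighbors_nonempty hdiam u v

theorem petersenGraph_edgeResolvers_mk (a b c d : Fin 5 ⊕ Fin 5) :
    petersenGraph.edgeResolvers s(a, b) s(c, d) = univ.filter fun z =>
      min (petersenDist a z) (petersenDist b z) ≠ min (petersenDist c z) (petersenDist d z) := by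
  rw [SimpleGraph.edgeResolvers_mk, petersenGraph_dist]

-- With the default limit, the `Decidable` instance of this four-fold quantifier is not
-- found and `decide` is handed `Classical.propDecidable`.
set_option synthInstance.maxSize 1024 in
theorem petersenGraph_four_le_card_edgeResolvers :
    ∀ e₁ ∈ petersenGraph.edgeSet, ∀ e₂ ∈ petersenGraph.edgeSet, e₁ ≠ e₂ →
      4 ≤ #(petersenGraph.edgeResolvers e₁ e₂) := by
  have hcard : ∀ a b c d, petersenGraph.Adj a b → petersenGraph.Adj c d → s(a, b) ≠ s(c, d) →
      4 ≤ #(univ.filter fun z => min (petersenDist a z) (petersenDist b z) ≠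
        min (petersenDist c z) (petersenDist d z)) := by
    decide
  intro e₁ h₁ e₂ h₂ hne
  induction e₁ using Sym2.ind with | _ a b =>
  induction e₂ using Sym2.ind with | _ c d =>
  rw [petersenGraph_edgeResolvers_mk]
  exact hcard a b c d h₁ h₂ hne

theorem petersenGraph_edgeResolvers_outer_inner (i : Fin 5) :
    petersenGraph.edgeResolvers s(.inl i, .inl (i + 1)) s(.inr (i + 2), .inr (i + 4)) =
      {.inl i, .inl (i + 1), .inr (i + 2), .inr (i + 4)} := by
  rw [petersenGraph_edgeResolvers_mk]
  revert i
  decide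

/-- For the Petersen graph, `edim_f = 5/2`. -/
theorem stmt_13 : petersenGraph.edimf = 5 / 2 := by
  refine IsLeast.csInf_eq ⟨⟨_, SimpleGraph.isEdgeResolvingFunction_const_inv (k := 4)
    four_pos petersenGraph_four_le_card_edgeResolvers, by norm_num⟩, ?_⟩
  rintro _ ⟨g, hg, rfl⟩
  have hR (i : Fin 5) : 1 ≤ ∑ z ∈ {.inl i, .inl (i + 1), .inr (i + 2), .inr (i + 4)}, g z := by
    rw [← petersenGraph_edgeResolvers_outer_inner]
    exact hg.2 _ (by revert i; decide) _ (by revert i; decide) (by revert i; decide)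
  have hcover := Fintype.card_le_mul_sum_of_one_le_sum _ (fun v => (hg.1 v).1) hR (c := 2)
    (by decide)
  rw [Fintype.card_fin] at hcover
  push_cast at hcover
  linarith
end

section
/- For the star K_{1,n−1} with n ≥ 3, edim_f(K_{1,n−1}) = (n−1)/2. -/
/-!
Two distinct edges `c lᵢ`, `c lⱼ` of the star are resolved exactly by the leaves `lᵢ` and `lⱼ`,
so an edge resolving function satisfies `g lᵢ + g lⱼ ≥ 1` for all `i ≠ j`. Summing this along
the cyclic rotation of the leaves gives `2 ∑ g ≥ n - 1`, and weight `1/2` on every leaf attains it.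
-/

open Finset
open scoped Classical

variable {V : Type*}

theorem card_le_two_mul_sum_of_one_le_add {ι : Type*} [Fintype ι] {σ : Equiv.Perm ι}
    (hσ : ∀ i, σ i ≠ i) {x : ι → ℝ} (hx : ∀ i j, i ≠ j → 1 ≤ x i + x j) :
    (Fintype.card ι : ℝ) ≤ 2 * ∑ i, x i :=
  calc (Fintype.card ι : ℝ) = ∑ _i : ι, (1 : ℝ) := by simp
    _ ≤ ∑ i, (x i + x (σ i)) := sum_le_sum fun i _ => hx i (σ i) (hσ i).symm
    _ = 2 * ∑ i, x i := by rw [sum_add_distrib, Equiv.sum_comp σ x, two_mul]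

theorem finRotate_apply_ne {m : ℕ} (hm : 2 ≤ m) (i : Fin m) : finRotate m i ≠ i :=
  Equiv.Perm.mem_support.mp (by simp [support_finRotate_of_le hm])

namespace SimpleGraph

variable {α β : Type*}

theorem completeBipartiteGraph_dist_inr_inr [Nonempty α] {i j : β} (h : i ≠ j) :
    (completeBipartiteGraph α β).dist (.inr i) (.inr j) = 2 := by
  let a : α := Classical.arbitrary α
  let w : (completeBipartiteGraph α β).Walk (.inr i) (.inr j) :=
    .cons (v := .inl a) (by simp) (.cons (by simp) .nil)
  have hle : (completeBipartiteGraph α β).dist (.inr i) (.inr j) ≤ 2 := dist_le w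
  have hne_zero : (completeBipartiteGraph α β).dist (.inr i) (.inr j) ≠ 0 :=
    (Reachable.pos_dist_of_ne ⟨w⟩ (by simpa using h)).ne'
  have hne_one : (completeBipartiteGraph α β).dist (.inr i) (.inr j) ≠ 1 := by
    simp [dist_eq_one_iff_adj]
  omega

theorem star_edgeDist_inl (i : β) (c : Fin 1) :
    (completeBipartiteGraph (Fin 1) β).edgeDist s(.inl 0, .inr i) (.inl c) = 0 := by
  simp [edgeDist, Subsingleton.elim c 0]

theorem star_edgeDist_inr (i k : β) :
    (completeBipartiteGraph (Fin 1) β).edgeDist s(.inl 0, .inr i) (.inr k) =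
      if k = i then 0 else 1 := by
  rcases eq_or_ne k i with rfl | h
  · simp [edgeDist]
  · simp only [edgeDist, Sym2.lift_mk, if_neg h]
    rw [dist_eq_one_iff_adj.mpr (by simp), completeBipartiteGraph_dist_inr_inr h.symm]
    rfl

theorem star_mem_edgeSet_iff {e : Sym2 (Fin 1 ⊕ β)} :
    e ∈ (completeBipartiteGraph (Fin 1) β).edgeSet ↔ ∃ i, e = s(.inl 0, .inr i) := by
  refine ⟨fun he => ?_, by rintro ⟨i, rfl⟩; simp⟩
  induction e with
  | h x y =>
    rw [mem_edgeSet] at he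
    rcases x with a | i <;> rcases y with b | j <;> simp at he
    · exact ⟨j, by rw [Subsingleton.elim a 0]⟩
    · exact ⟨i, by rw [Subsingleton.elim b 0, Sym2.eq_swap]⟩

theorem star_filter_edgeDist_ne [Fintype β] {i j : β} (h : i ≠ j) :
    univ.filter (fun z => (completeBipartiteGraph (Fin 1) β).edgeDist s(.inl 0, .inr i) z ≠
        (completeBipartiteGraph (Fin 1) β).edgeDist s(.inl 0, .inr j) z) =
      {.inr i, .inr j} := by
  ext (c | k)
  · simp [star_edgeDist_inl]
  · simp only [mem_filter, mem_univ, true_and, star_edgeDist_inr, mem_insert, mem_singleton,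
      Sum.inr.injEq]
    rcases eq_or_ne k i with rfl | hki <;> rcases eq_or_ne k j with rfl | hkj <;> simp_all

variable [Fintype β]

theorem star_isEdgeResolvingFunction_iff {g : Fin 1 ⊕ β → ℝ} :
    (completeBipartiteGraph (Fin 1) β).IsEdgeResolvingFunction g ↔
      (∀ v, 0 ≤ g v ∧ g v ≤ 1) ∧ ∀ i j, i ≠ j → 1 ≤ g (.inr i) + g (.inr j) := by
  refine and_congr_right fun _ => ⟨fun hg i j hij => ?_, fun hg e₁ he₁ e₂ he₂ hne => ?_⟩
  · have h := hg s(.inl 0, .inr i) (by simp) s(.inl 0, .inr j) (by simp) (by simp [hij])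
    rwa [star_filter_edgeDist_ne hij, sum_pair (by simp [hij])] at h
  · obtain ⟨i, rfl⟩ := star_mem_edgeSet_iff.mp he₁
    obtain ⟨j, rfl⟩ := star_mem_edgeSet_iff.mp he₂
    have hij : i ≠ j := by rintro rfl; exact hne rfl
    rw [star_filter_edgeDist_ne hij, sum_pair (by simp [hij])]
    exact hg i j hij

end SimpleGraph

/-- For the star `K_{1,n-1}` with `n ≥ 3`, `edim_f(K_{1,n-1}) = (n-1)/2`. -/
theorem stmt_16 (n : ℕ) (hn : 3 ≤ n) :
    (completeBipartiteGraph (Fin 1) (Fin (n - 1))).edimf = ((n : ℝ) - 1) / 2 := by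
  have hleaves : ((n - 1 : ℕ) : ℝ) = n - 1 := by push_cast [show 1 ≤ n by omega]; ring
  refine IsLeast.csInf_eq ⟨⟨Sum.elim 0 fun _ => 1 / 2, ?_, ?_⟩, ?_⟩
  · refine SimpleGraph.star_isEdgeResolvingFunction_iff.mpr ⟨fun v => ?_, fun _ _ _ => by norm_num⟩
    rcases v with _ | _ <;> norm_num
  · simp [Fintype.sum_sum_type, hleaves, div_eq_mul_inv]
  · rintro _ ⟨g, hg, rfl⟩
    obtain ⟨hbounds, hpair⟩ := SimpleGraph.star_isEdgeResolvingFunction_iff.mp hg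
    have hleaf_sum := card_le_two_mul_sum_of_one_le_add
      (finRotate_apply_ne (show 2 ≤ n - 1 by omega)) hpair
    rw [Fintype.card_fin, hleaves] at hleaf_sum
    rw [Fintype.sum_sum_type, Fin.sum_univ_one]
    linarith [(hbounds (.inl 0)).1]
end
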